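/- Kuroda-type criterion in B(H): a unitarily invariant norm Φ (defined on finite-rank operators of B(H) with canonical trace Tr) satisfies lim_{Tr(e)→∞} Φ(e)/Tr(e) = 0 over finite-rank projections e if and only if Φ is not equivalent to the trace norm ‖·‖₁ on finite-rank operators. -/

import Mathlib

open ContinuousLinearMap
open scoped InnerProductSpace

noncomputable section

/-- An orthogonal projection on a Hilbert space. -/
def IsProjection {H : Type} [NormedAddCommGroup H] [InnerProductSpace ℂ H]
    [CompleteSpace H] (p : H →L[ℂ] H) : Prop :=
  IsSelfAdjoint p ∧ p * p = p

/-- A finite-rank bounded operator. -/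
def FiniteRankOp {H : Type} [NormedAddCommGroup H] [InnerProductSpace ℂ H]
    [CompleteSpace H] (x : H →L[ℂ] H) : Prop :=
  FiniteDimensional ℂ (LinearMap.range (x : H →ₗ[ℂ] H))

/-- The rank of a bounded operator. -/
def rankOp {H : Type} [NormedAddCommGroup H] [InnerProductSpace ℂ H]
    [CompleteSpace H] (x : H →L[ℂ] H) : ℕ :=
  Module.finrank ℂ (LinearMap.range (x : H →ₗ[ℂ] H))

/-- The absolute value `|z| = (z* z)^{1/2}` of a bounded operator. -/
def absOp {H : Type} [NormedAddCommGroup H] [InnerProductSpace ℂ H]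
    [CompleteSpace H] (z : H →L[ℂ] H) : H →L[ℂ] H :=
  CFC.sqrt (star z * z)

/-- The trace norm `‖z‖₁ = Tr |z|`, computed in a fixed orthonormal basis `ξ`. -/
def trNorm {H : Type} [NormedAddCommGroup H] [InnerProductSpace ℂ H]
    [CompleteSpace H] (ξ : HilbertBasis ℕ ℂ H) (z : H →L[ℂ] H) : ℝ :=
  ∑' i, (inner ℂ (ξ i) (absOp z (ξ i)) : ℂ).re

open InnerProductSpace Filter

/-!
Any two finite orthonormal families are exchanged by a unitary, so by unitary invariance
`Φ (∑ sᵢ |bᵢ⟩⟨aᵢ|)` depends only on the singular values `sᵢ`. In particular `Φ e = φ (rank e)`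
for finite-rank projections, where `φ n = Φ Pₙ` for the projection `Pₙ` onto `n` basis vectors,
and `φ` is subadditive. Through the singular value decomposition of a finite-rank `x`, the
triangle inequality gives `Φ x ≤ φ 1 ‖x‖₁`, and averaging `x` over the cyclic shifts of its
singular vectors gives `‖x‖₁ φ n ≤ n Φ x` when `x` has rank `n`.

By Fekete's lemma `φ n / n` tends to its infimum. If `Φ e / rank e` does not tend to `0`, this
infimum is at least some `ε > 0`, so `φ n ≥ ε n` for all `n` and `Φ ≥ ε ‖·‖₁`. Conversely, `Φ ≥ c ‖·‖₁`
fails at `Pₙ` as soon as `φ n ≤ (c / 2) n`.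
-/

theorem one_sub_star_mul_self_add_mem_unitary {R : Type*} [Ring R] [StarRing R] {v : R}
    (hv : IsStarNormal v) (hvv : v * star v * v = v) : 1 - star v * v + v ∈ unitary R := by
  set p := star v * v with hp
  have hvp : v * star v = p := hv.star_comm_self.eq.symm
  have hp_star : star p = p := by rw [hp, star_mul, star_star]
  have hvp' : v * p = v := by rw [hp, ← mul_assoc, hvv]
  have hpv : p * v = v := by rw [← hvp, hvv]
  have hpv' : p * star v = star v := by rw [← hp_star, ← star_mul, hvp']
  have hvp'' : star v * p = star v := by rw [← hp_star, ← star_mul, hpv]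
  have hpp : p * p = p := by rw [hp, ← mul_assoc, hpv']
  have hstar : star (1 - p + v) = 1 - p + star v := by rw [star_add, star_sub, star_one, hp_star]
  constructor
  · rw [hstar]
    calc (1 - p + star v) * (1 - p + v)
        = 1 - p - p + p * p - p * v + v + star v - star v * p + star v * v := by noncomm_ring
      _ = 1 := by rw [hpp, hpv, hvp'', ← hp]; abel
  · rw [hstar]
    calc (1 - p + v) * (1 - p + star v)
        = 1 - p - p + p * p - p * star v + star v + v - v * p + v * star v := by noncomm_ring
      _ = 1 := by rw [hpp, hpv', hvp', hvp]; abel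

theorem Subadditive.mul_le_of_frequently {u : ℕ → ℝ} (h : Subadditive u) (hu : ∀ n, 0 ≤ u n)
    {c : ℝ} (hc : ∃ᶠ n in atTop, c * n ≤ u n) (n : ℕ) : c * n ≤ u n := by
  have hbdd : BddBelow (Set.range fun n => u n / n) :=
    ⟨0, by rintro _ ⟨n, rfl⟩; exact div_nonneg (hu n) n.cast_nonneg⟩
  have hlim : c ≤ h.lim := ge_of_tendsto_of_frequently (h.tendsto_lim hbdd) <|
    (hc.and_eventually (eventually_gt_atTop 0)).mono fun n ⟨hn, hpos⟩ =>
      (le_div_iff₀ (by positivity)).mpr hn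
  rcases Nat.eq_zero_or_pos n with rfl | hn
  · simpa using hu 0
  · exact (le_div_iff₀ (by positivity)).mp (hlim.trans (h.lim_le_div hbdd hn.ne'))

section RankOne

variable {𝕜 E ι : Type*} [RCLike 𝕜] [NormedAddCommGroup E] [InnerProductSpace 𝕜 E]

theorem orthonormal_inv_norm_smul {v : ι → E} (hv0 : ∀ i, v i ≠ 0)
    (hv : Pairwise fun i j => ⟪v i, v j⟫_𝕜 = 0) : Orthonormal 𝕜 fun i => (‖v i‖⁻¹ : 𝕜) • v i :=
  ⟨fun i => norm_smul_inv_norm (hv0 i), fun i j hij => by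
    simp [inner_smul_left, inner_smul_right, hv hij]⟩

theorem HilbertBasis.hasSum_inner_rankOne_apply (ξ : HilbertBasis ι 𝕜 E) (x y : E) :
    HasSum (fun k => ⟪ξ k, rankOne 𝕜 x y (ξ k)⟫_𝕜) ⟪y, x⟫_𝕜 := by
  simpa [inner_smul_right] using ξ.hasSum_inner_mul_inner y x

theorem HilbertBasis.orthonormal_fin (ξ : HilbertBasis ℕ 𝕜 E) (n : ℕ) :
    Orthonormal 𝕜 fun i : Fin n => ξ i :=
  ξ.orthonormal.comp _ Fin.val_injective

theorem mul_starProjection_range_star_mul_self [CompleteSpace E] (x : E →L[𝕜] E)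
    [(LinearMap.range ((star x * x : E →L[𝕜] E) : E →ₗ[𝕜] E)).HasOrthogonalProjection] :
    x * (LinearMap.range ((star x * x : E →L[𝕜] E) : E →ₗ[𝕜] E)).starProjection = x := by
  set W := LinearMap.range ((star x * x : E →L[𝕜] E) : E →ₗ[𝕜] E)
  ext v
  have hw : v - W.starProjection v ∈ Wᗮ := W.sub_starProjection_mem_orthogonal v
  have hxw : x (v - W.starProjection v) = 0 := by
    rw [← inner_self_eq_zero (𝕜 := 𝕜), ← adjoint_inner_right, ← star_eq_adjoint,
      ← mul_apply_eq_comp]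
    exact Submodule.inner_left_of_mem_orthogonal (LinearMap.mem_range_self _ _) hw
  rw [map_sub, sub_eq_zero] at hxw
  exact hxw.symm

variable [Fintype ι]

theorem sum_smul_rankOne_mul_sum_smul_rankOne [DecidableEq ι] (c d : ι → 𝕜) (p r : ι → E)
    {q : ι → E} (hq : Orthonormal 𝕜 q) :
    (∑ i, c i • rankOne 𝕜 (p i) (q i)) * (∑ i, d i • rankOne 𝕜 (q i) (r i)) =
      ∑ i, (c i * d i) • rankOne 𝕜 (p i) (r i) := by
  simp [Finset.sum_mul_sum, mul_def, rankOne_comp_rankOne, orthonormal_iff_ite.mp hq, ite_smul,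
    smul_smul, mul_comm]

theorem sum_rankOne_mul_sum_rankOne [DecidableEq ι] (p r : ι → E) {q : ι → E}
    (hq : Orthonormal 𝕜 q) :
    (∑ i, rankOne 𝕜 (p i) (q i)) * (∑ i, rankOne 𝕜 (q i) (r i)) = ∑ i, rankOne 𝕜 (p i) (r i) := by
  simpa using sum_smul_rankOne_mul_sum_smul_rankOne 1 1 p r hq

theorem Orthonormal.sum_rankOne_self_eq_starProjection {b : ι → E} (hb : Orthonormal 𝕜 b)
    [(Submodule.span 𝕜 (Set.range b)).HasOrthogonalProjection] :
    ∑ i, rankOne 𝕜 (b i) (b i) = (Submodule.span 𝕜 (Set.range b)).starProjection := by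
  let B := (Module.Basis.span hb.linearIndependent).toOrthonormalBasis (by
    rw [show ⇑(Module.Basis.span hb.linearIndependent) = _ from
      funext (Module.Basis.span_apply hb.linearIndependent)]
    exact orthonormal_span hb)
  rw [B.starProjection_eq_sum_rankOne]
  simp [B, Module.Basis.span_apply]

theorem Orthonormal.exists_orthonormalBasis_sum_extension [FiniteDimensional 𝕜 E] {a : ι → E}
    (ha : Orthonormal 𝕜 a) :
    ∃ A : OrthonormalBasis (ι ⊕ Fin (Module.finrank 𝕜 E - Fintype.card ι)) 𝕜 E,
      ∀ i, A (.inl i) = a i := by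
  classical
  have hcard := ha.linearIndependent.fintype_card_le_finrank
  have hres : Orthonormal 𝕜 ((Set.range Sum.inl).domRestrict
      (Sum.elim a (0 : Fin (Module.finrank 𝕜 E - Fintype.card ι) → E))) := by
    rw [orthonormal_iff_ite]
    rintro ⟨_, i, rfl⟩ ⟨_, j, rfl⟩
    simp [orthonormal_iff_ite.mp ha i j, Subtype.ext_iff]
  obtain ⟨A, hA⟩ := hres.exists_orthonormalBasis_extension_of_card_eq (by simp; omega)
  exact ⟨A, fun i => hA _ ⟨i, rfl⟩⟩

theorem OrthonormalBasis.exists_mem_unitary_apply_eq [CompleteSpace E] {K : Submodule 𝕜 E}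
    [K.HasOrthogonalProjection] [DecidableEq ι] (A B : OrthonormalBasis ι 𝕜 K) :
    ∃ u ∈ unitary (E →L[𝕜] E), ∀ i, u (A i) = B i := by
  have hA : Orthonormal 𝕜 fun i => (A i : E) := K.subtypeₗᵢ.orthonormal_comp_iff.mpr A.orthonormal
  have hB : Orthonormal 𝕜 fun i => (B i : E) := K.subtypeₗᵢ.orthonormal_comp_iff.mpr B.orthonormal
  set v := ∑ i, rankOne 𝕜 (B i : E) (A i : E) with hv
  have hstar : star v = ∑ i, rankOne 𝕜 (A i : E) (B i : E) := by
    simp [hv, star_sum, star_eq_adjoint]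
  have hvv : star v * v = K.starProjection := by
    rw [hstar, sum_rankOne_mul_sum_rankOne _ _ hB, A.starProjection_eq_sum_rankOne]
  have hvv' : v * star v = K.starProjection := by
    rw [hstar, sum_rankOne_mul_sum_rankOne _ _ hA, B.starProjection_eq_sum_rankOne]
  have hnormal : IsStarNormal v := ⟨by rw [commute_iff_eq, hvv, hvv']⟩
  have hvvv : v * star v * v = v := by
    rw [hvv', B.starProjection_eq_sum_rankOne, sum_rankOne_mul_sum_rankOne _ _ hB]
  refine ⟨_, one_sub_star_mul_self_add_mem_unitary hnormal hvvv, fun i => ?_⟩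
  rw [hvv]
  simp [hv, orthonormal_iff_ite.mp hA]

theorem Orthonormal.exists_mem_unitary_apply_eq [CompleteSpace E] {a b : ι → E}
    (ha : Orthonormal 𝕜 a) (hb : Orthonormal 𝕜 b) :
    ∃ u ∈ unitary (E →L[𝕜] E), ∀ i, u (a i) = b i := by
  classical
  let K := Submodule.span 𝕜 (Set.range a ∪ Set.range b)
  have : FiniteDimensional 𝕜 K :=
    FiniteDimensional.span_of_finite 𝕜 ((Set.finite_range a).union (Set.finite_range b))
  have haK i : a i ∈ K := Submodule.subset_span (.inl ⟨i, rfl⟩)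
  have hbK i : b i ∈ K := Submodule.subset_span (.inr ⟨i, rfl⟩)
  obtain ⟨A, hA⟩ := (ha.codRestrict K haK).exists_orthonormalBasis_sum_extension
  obtain ⟨B, hB⟩ := (hb.codRestrict K hbK).exists_orthonormalBasis_sum_extension
  obtain ⟨u, hu, huAB⟩ := A.exists_mem_unitary_apply_eq B
  refine ⟨u, hu, fun i => ?_⟩
  simpa [hA, hB] using huAB (.inl i)

end RankOne

section FiniteRank

variable {H : Type} [NormedAddCommGroup H] [InnerProductSpace ℂ H] [CompleteSpace H]

theorem FiniteRankOp.of_range_le {x : H →L[ℂ] H} {K : Submodule ℂ H} [FiniteDimensional ℂ K]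
    (h : LinearMap.range (x : H →ₗ[ℂ] H) ≤ K) : FiniteRankOp x :=
  Submodule.finiteDimensional_of_le h

theorem finiteRankOp_zero : FiniteRankOp (0 : H →L[ℂ] H) :=
  .of_range_le (K := ⊥) fun _ ⟨_, hv⟩ => hv ▸ rfl

theorem FiniteRankOp.add {x y : H →L[ℂ] H} (hx : FiniteRankOp x) (hy : FiniteRankOp y) :
    FiniteRankOp (x + y) :=
  have : FiniteDimensional ℂ (LinearMap.range (x : H →ₗ[ℂ] H)) := hx
  have : FiniteDimensional ℂ (LinearMap.range (y : H →ₗ[ℂ] H)) := hy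
  .of_range_le (LinearMap.range_add_le (x : H →ₗ[ℂ] H) y)

theorem FiniteRankOp.smul {x : H →L[ℂ] H} (hx : FiniteRankOp x) (c : ℂ) : FiniteRankOp (c • x) :=
  have : FiniteDimensional ℂ (LinearMap.range (x : H →ₗ[ℂ] H)) := hx
  .of_range_le (LinearMap.range_smul_le_range (x : H →ₗ[ℂ] H) c)

theorem FiniteRankOp.sum {ι : Type*} {s : Finset ι} {f : ι → H →L[ℂ] H}
    (hf : ∀ i ∈ s, FiniteRankOp (f i)) : FiniteRankOp (∑ i ∈ s, f i) :=
  Finset.sum_induction f FiniteRankOp (fun _ _ => .add) finiteRankOp_zero hf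

theorem finiteRankOp_rankOne (b a : H) : FiniteRankOp (rankOne ℂ b a) :=
  .of_range_le (K := ℂ ∙ b) fun _ ⟨_, hv⟩ =>
    hv ▸ Submodule.smul_mem _ _ (Submodule.mem_span_singleton_self b)

theorem finiteRankOp_sum_smul_rankOne {ι : Type*} [Fintype ι] (s : ι → ℂ) (a b : ι → H) :
    FiniteRankOp (∑ i, s i • rankOne ℂ (b i) (a i)) :=
  .sum fun _ _ => (finiteRankOp_rankOne _ _).smul _

theorem FiniteRankOp.exists_orthonormal_eq_sum_rankOne_apply {x : H →L[ℂ] H}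
    (hx : FiniteRankOp x) :
    ∃ (n : ℕ) (e : Fin n → H), Orthonormal ℂ e ∧ (∀ j, x (e j) ≠ 0) ∧
      (Pairwise fun i j => ⟪x (e i), x (e j)⟫_ℂ = 0) ∧ x = ∑ j, rankOne ℂ (x (e j)) (e j) := by
  set T := star x * x
  set W := LinearMap.range (T : H →ₗ[ℂ] H)
  have : FiniteDimensional ℂ (LinearMap.range (x : H →ₗ[ℂ] H)) := hx
  have : FiniteDimensional ℂ W := Submodule.finiteDimensional_of_le
    (S₂ := (LinearMap.range (x : H →ₗ[ℂ] H)).map ((star x : H →L[ℂ] H) : H →ₗ[ℂ] H))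
    fun _ ⟨v, hv⟩ => ⟨x v, ⟨v, rfl⟩, hv⟩
  have hTsymm : (T : H →ₗ[ℂ] H).IsSymmetric := (IsSelfAdjoint.star_mul_self x).isSymmetric
  have hT := hTsymm.restrict_invariant (V := W) fun v _ => LinearMap.mem_range_self _ v
  set E := hT.eigenvectorBasis rfl
  set e : Fin (Module.finrank ℂ W) → H := fun j => E j
  have he : Orthonormal ℂ e := W.subtypeₗᵢ.orthonormal_comp_iff.mpr E.orthonormal
  have hTe j : T (e j) = (hT.eigenvalues rfl j : ℂ) • e j :=
    congrArg Subtype.val (hT.apply_eigenvectorBasis rfl j)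
  have hxx u v : ⟪x u, x v⟫_ℂ = ⟪u, T v⟫_ℂ := by rw [← adjoint_inner_right]; rfl
  refine ⟨_, e, he, fun j hj => ?_, fun i j hij => ?_, ?_⟩
  · -- `e j = T w` lies in the range of `T`, which is orthogonal to the kernel of `T`.
    obtain ⟨w, hw⟩ : e j ∈ W := (E j).2
    have : ⟪(T : H →ₗ[ℂ] H) w, e j⟫_ℂ = 0 := by rw [hTsymm w, coe_coe, ← hxx, hj, inner_zero_right]
    rw [hw, inner_self_eq_zero] at this
    exact he.ne_zero j this
  · dsimp only
    rw [hxx, hTe, inner_smul_right, orthonormal_iff_ite.mp he, if_neg hij, mul_zero]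
  · conv_lhs => rw [← mul_starProjection_range_star_mul_self x, E.starProjection_eq_sum_rankOne]
    simp [Finset.mul_sum, mul_def, comp_rankOne, e]

theorem FiniteRankOp.exists_sum_smul_rankOne {x : H →L[ℂ] H} (hx : FiniteRankOp x) :
    ∃ (n : ℕ) (s : Fin n → ℝ) (a b : Fin n → H), Orthonormal ℂ a ∧ Orthonormal ℂ b ∧
      (∀ i, 0 < s i) ∧ x = ∑ i, (s i : ℂ) • rankOne ℂ (b i) (a i) := by
  obtain ⟨n, e, he, hne, horth, hx_eq⟩ := hx.exists_orthonormal_eq_sum_rankOne_apply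
  refine ⟨n, fun j => ‖x (e j)‖, e, fun j => (‖x (e j)‖⁻¹ : ℂ) • x (e j), he,
    orthonormal_inv_norm_smul hne horth, fun j => norm_pos_iff.mpr (hne j), ?_⟩
  conv_lhs => rw [hx_eq]
  refine Finset.sum_congr rfl fun j _ => ?_
  rw [map_smul, smul_apply, smul_smul, mul_inv_cancel₀ (by simpa using hne j), one_smul]

theorem star_sum_ofReal_smul_rankOne_mul_self {ι : Type*} [Fintype ι] (t : ι → ℝ) (a : ι → H)
    {b : ι → H} (hb : Orthonormal ℂ b) :
    star (∑ i, (t i : ℂ) • rankOne ℂ (b i) (a i)) * (∑ i, (t i : ℂ) • rankOne ℂ (b i) (a i)) =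
      ∑ i, ((t i : ℂ) * t i) • rankOne ℂ (a i) (a i) := by
  classical
  have : star (∑ i, (t i : ℂ) • rankOne ℂ (b i) (a i)) =
      ∑ i, (t i : ℂ) • rankOne ℂ (a i) (b i) := by
    simp [star_sum, star_eq_adjoint]
  rw [this, sum_smul_rankOne_mul_sum_smul_rankOne _ _ _ _ hb]

theorem absOp_sum_smul_rankOne {ι : Type*} [Fintype ι] {s : ι → ℝ} (hs : ∀ i, 0 ≤ s i)
    {a b : ι → H} (ha : Orthonormal ℂ a) (hb : Orthonormal ℂ b) :
    absOp (∑ i, (s i : ℂ) • rankOne ℂ (b i) (a i)) = ∑ i, (s i : ℂ) • rankOne ℂ (a i) (a i) := by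
  set A := ∑ i, (s i : ℂ) • rankOne ℂ (a i) (a i)
  have hA : 0 ≤ A := by
    convert star_mul_self_nonneg (∑ i, (√(s i) : ℂ) • rankOne ℂ (a i) (a i)) using 1
    rw [star_sum_ofReal_smul_rankOne_mul_self _ _ ha]
    simp [A, ← Complex.ofReal_mul, Real.mul_self_sqrt (hs _)]
  rw [absOp, star_sum_ofReal_smul_rankOne_mul_self _ _ hb,
    ← star_sum_ofReal_smul_rankOne_mul_self _ _ ha, hA.isSelfAdjoint.star_eq, CFC.sqrt_mul_self A hA]

theorem trNorm_sum_smul_rankOne (ξ : HilbertBasis ℕ ℂ H) {ι : Type*} [Fintype ι] {s : ι → ℝ}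
    (hs : ∀ i, 0 ≤ s i) {a b : ι → H} (ha : Orthonormal ℂ a) (hb : Orthonormal ℂ b) :
    trNorm ξ (∑ i, (s i : ℂ) • rankOne ℂ (b i) (a i)) = ∑ i, s i := by
  rw [trNorm, absOp_sum_smul_rankOne hs ha hb]
  refine HasSum.tsum_eq ?_
  have := hasSum_sum fun i (_ : i ∈ Finset.univ) =>
    (ξ.hasSum_inner_rankOne_apply (a i) (a i)).mul_left (s i : ℂ)
  simpa [inner_sum, inner_smul_right, ha.1, Finset.sum_apply] using Complex.hasSum_re this

theorem IsProjection.exists_eq_sum_rankOne {e : H →L[ℂ] H} (he : IsProjection e)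
    (hfr : FiniteRankOp e) :
    ∃ b : Fin (rankOp e) → H, Orthonormal ℂ b ∧ e = ∑ i, rankOne ℂ (b i) (b i) := by
  have : FiniteDimensional ℂ (LinearMap.range (e : H →ₗ[ℂ] H)) := hfr
  obtain ⟨_, he_eq⟩ := isStarProjection_iff_eq_starProjection_range.mp ⟨he.2, he.1⟩
  let B := stdOrthonormalBasis ℂ (LinearMap.range (e : H →ₗ[ℂ] H))
  refine ⟨_, (LinearMap.range _).subtypeₗᵢ.orthonormal_comp_iff.mpr B.orthonormal, ?_⟩
  conv_lhs => rw [he_eq, B.starProjection_eq_sum_rankOne]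
  rfl

end FiniteRank

section InitialProj

variable {H : Type} [NormedAddCommGroup H] [InnerProductSpace ℂ H] (ξ : HilbertBasis ℕ ℂ H) (n : ℕ)

-- `Φ (initialProj ξ n)` is the sequence `φ(n)` of the informal statement.
def initialProj : H →L[ℂ] H :=
  ∑ i : Fin n, rankOne ℂ (ξ i) (ξ i)

theorem initialProj_eq_starProjection :
    ∃ (_ : (Submodule.span ℂ (Set.range fun i : Fin n => ξ i)).HasOrthogonalProjection),
      initialProj ξ n = (Submodule.span ℂ (Set.range fun i : Fin n => ξ i)).starProjection := by
  have : FiniteDimensional ℂ (Submodule.span ℂ (Set.range fun i : Fin n => ξ i)) :=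
    FiniteDimensional.span_of_finite ℂ (Set.finite_range _)
  exact ⟨inferInstance, (ξ.orthonormal_fin n).sum_rankOne_self_eq_starProjection⟩

variable [CompleteSpace H]

theorem isProjection_initialProj : IsProjection (initialProj ξ n) := by
  obtain ⟨_, h⟩ := initialProj_eq_starProjection ξ n
  rw [h]
  exact ⟨isSelfAdjoint_starProjection _, (Submodule.isIdempotentElem_starProjection _).eq⟩

theorem rankOp_initialProj : rankOp (initialProj ξ n) = n := by
  obtain ⟨_, h⟩ := initialProj_eq_starProjection ξ n
  rw [rankOp, h, Submodule.range_starProjection,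
    finrank_span_eq_card (ξ.orthonormal_fin n).linearIndependent, Fintype.card_fin]

theorem initialProj_one_ne_zero : initialProj ξ 1 ≠ 0 := fun h => by
  have h1 := rankOp_initialProj ξ 1
  rw [h, rankOp, toLinearMap_zero, LinearMap.range_zero, finrank_bot] at h1
  exact zero_ne_one h1

theorem finiteRankOp_initialProj : FiniteRankOp (initialProj ξ n) :=
  .sum fun _ _ => finiteRankOp_rankOne _ _

theorem trNorm_initialProj : trNorm ξ (initialProj ξ n) = n := by
  simpa [initialProj] using trNorm_sum_smul_rankOne ξ (s := fun _ : Fin n => 1)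
    (fun _ => zero_le_one) (ξ.orthonormal_fin n) (ξ.orthonormal_fin n)

end InitialProj

section UnitarilyInvariant

variable {H : Type} [NormedAddCommGroup H] [InnerProductSpace ℂ H] [CompleteSpace H]

structure IsUnitarilyInvariantSeminorm (Φ : (H →L[ℂ] H) → ℝ) : Prop where
  add_le : ∀ x y, FiniteRankOp x → FiniteRankOp y → Φ (x + y) ≤ Φ x + Φ y
  smul : ∀ (c : ℂ) x, FiniteRankOp x → Φ (c • x) = ‖c‖ * Φ x
  unitary_mul_mul : ∀ u v x, u ∈ unitary (H →L[ℂ] H) → v ∈ unitary (H →L[ℂ] H) →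
    FiniteRankOp x → Φ (u * x * v) = Φ x

namespace IsUnitarilyInvariantSeminorm

variable {Φ : (H →L[ℂ] H) → ℝ} (hΦ : IsUnitarilyInvariantSeminorm Φ) (ξ : HilbertBasis ℕ ℂ H)
include hΦ

theorem map_zero : Φ 0 = 0 := by
  simpa using hΦ.smul 0 0 finiteRankOp_zero

theorem map_sum_le {ι : Type*} (s : Finset ι) {f : ι → H →L[ℂ] H}
    (hf : ∀ i ∈ s, FiniteRankOp (f i)) : Φ (∑ i ∈ s, f i) ≤ ∑ i ∈ s, Φ (f i) :=
  Finset.le_sum_of_subadditive_on_pred Φ FiniteRankOp hΦ.map_zero.le hΦ.add_le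
    (fun _ _ => .add) f hf

theorem map_sum_smul_rankOne_eq {ι : Type*} [Fintype ι] (s : ι → ℂ) {a b a' b' : ι → H}
    (ha : Orthonormal ℂ a) (hb : Orthonormal ℂ b) (ha' : Orthonormal ℂ a')
    (hb' : Orthonormal ℂ b') :
    Φ (∑ i, s i • rankOne ℂ (b i) (a i)) = Φ (∑ i, s i • rankOne ℂ (b' i) (a' i)) := by
  obtain ⟨u, hu, hub⟩ := hb.exists_mem_unitary_apply_eq hb'
  obtain ⟨w, hw, hwa⟩ := ha.exists_mem_unitary_apply_eq ha'
  have : u * (∑ i, s i • rankOne ℂ (b i) (a i)) * star w = ∑ i, s i • rankOne ℂ (b' i) (a' i) := by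
    simp [Finset.mul_sum, Finset.sum_mul, mul_def, comp_rankOne, rankOne_comp, hub, hwa,
      star_eq_adjoint]
  rw [← this, hΦ.unitary_mul_mul _ _ _ hu (Unitary.star_mem hw) (finiteRankOp_sum_smul_rankOne ..)]

theorem map_sum_rankOne {n : ℕ} {a b : Fin n → H} (ha : Orthonormal ℂ a)
    (hb : Orthonormal ℂ b) : Φ (∑ i, rankOne ℂ (b i) (a i)) = Φ (initialProj ξ n) := by
  simpa [initialProj] using hΦ.map_sum_smul_rankOne_eq 1 ha hb (ξ.orthonormal_fin n)
    (ξ.orthonormal_fin n)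

theorem map_rankOne {a b : H} (ha : ‖a‖ = 1) (hb : ‖b‖ = 1) :
    Φ (rankOne ℂ b a) = Φ (initialProj ξ 1) := by
  simpa using hΦ.map_sum_rankOne ξ (a := fun _ : Fin 1 => a) (b := fun _ => b)
    (orthonormal_subsingleton_iff.mpr fun _ => ha) (orthonormal_subsingleton_iff.mpr fun _ => hb)

theorem map_eq_of_isProjection {e : H →L[ℂ] H} (he : IsProjection e) (hfr : FiniteRankOp e) :
    Φ e = Φ (initialProj ξ (rankOp e)) := by
  obtain ⟨b, hb, hbe⟩ := he.exists_eq_sum_rankOne hfr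
  exact (congrArg Φ hbe).trans (hΦ.map_sum_rankOne ξ hb hb)

theorem subadditive : Subadditive fun n => Φ (initialProj ξ n) := fun m n => by
  have hsplit : initialProj ξ (m + n) =
      initialProj ξ m + ∑ i : Fin n, rankOne ℂ (ξ (m + i)) (ξ (m + i)) := by
    simp [initialProj, Fin.sum_univ_add]
  have hon : Orthonormal ℂ fun i : Fin n => ξ (m + i) :=
    ξ.orthonormal.comp _ fun i j h => Fin.ext (by simpa using h)
  calc Φ (initialProj ξ (m + n))
      ≤ Φ (initialProj ξ m) + Φ (∑ i : Fin n, rankOne ℂ (ξ (m + i)) (ξ (m + i))) :=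
        hsplit ▸ hΦ.add_le _ _ (finiteRankOp_initialProj ξ m)
          (.sum fun _ _ => finiteRankOp_rankOne _ _)
    _ = Φ (initialProj ξ m) + Φ (initialProj ξ n) := by rw [hΦ.map_sum_rankOne ξ hon hon]

theorem le_mul_trNorm {x : H →L[ℂ] H} (hx : FiniteRankOp x) :
    Φ x ≤ Φ (initialProj ξ 1) * trNorm ξ x := by
  obtain ⟨n, s, a, b, ha, hb, hs, rfl⟩ := hx.exists_sum_smul_rankOne
  rw [trNorm_sum_smul_rankOne ξ (fun i => (hs i).le) ha hb, Finset.mul_sum]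
  refine (hΦ.map_sum_le _ fun i _ => (finiteRankOp_rankOne _ _).smul _).trans_eq
    (Finset.sum_congr rfl fun i _ => ?_)
  rw [hΦ.smul _ _ (finiteRankOp_rankOne _ _), hΦ.map_rankOne ξ (ha.1 i) (hb.1 i)]
  simp [abs_of_pos (hs i), mul_comm]

theorem sum_mul_le_card_mul {n : ℕ} [NeZero n] {s : Fin n → ℝ} (hs : ∀ i, 0 ≤ s i)
    {a b : Fin n → H} (ha : Orthonormal ℂ a) (hb : Orthonormal ℂ b) :
    (∑ i, s i) * Φ (initialProj ξ n) ≤ n * Φ (∑ i, (s i : ℂ) • rankOne ℂ (b i) (a i)) := by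
  let y k := ∑ i, (s i : ℂ) • rankOne ℂ (b (i + k)) (a (i + k))
  have hy k : Φ (y k) = Φ (∑ i, (s i : ℂ) • rankOne ℂ (b i) (a i)) :=
    hΦ.map_sum_smul_rankOne_eq _ (ha.comp _ (add_left_injective k))
      (hb.comp _ (add_left_injective k)) ha hb
  have hsum : ∑ k, y k = ((∑ i, s i : ℝ) : ℂ) • ∑ j, rankOne ℂ (b j) (a j) := by
    have hshift i : ∑ k, rankOne ℂ (b (i + k)) (a (i + k)) = ∑ j, rankOne ℂ (b j) (a j) :=
      Equiv.sum_comp (Equiv.addLeft i) fun j => rankOne ℂ (b j) (a j)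
    simp only [y]
    rw [Finset.sum_comm]
    simp only [← Finset.smul_sum, hshift, ← Finset.sum_smul, Complex.ofReal_sum]
  have hs_sum : 0 ≤ ∑ i, s i := Finset.sum_nonneg fun i _ => hs i
  calc (∑ i, s i) * Φ (initialProj ξ n) = Φ (∑ k, y k) := by
        rw [hsum, hΦ.smul _ _ (.sum fun _ _ => finiteRankOp_rankOne _ _),
          hΦ.map_sum_rankOne ξ ha hb, Complex.norm_real, Real.norm_of_nonneg hs_sum]
    _ ≤ ∑ k, Φ (y k) := hΦ.map_sum_le _ fun _ _ => finiteRankOp_sum_smul_rankOne _ _ _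
    _ = n * Φ (∑ i, (s i : ℂ) • rankOne ℂ (b i) (a i)) := by simp [hy]

theorem mul_trNorm_le {c : ℝ} (hc : ∀ n : ℕ, c * n ≤ Φ (initialProj ξ n)) {x : H →L[ℂ] H}
    (hx : FiniteRankOp x) : c * trNorm ξ x ≤ Φ x := by
  obtain ⟨n, s, a, b, ha, hb, hs, rfl⟩ := hx.exists_sum_smul_rankOne
  rw [trNorm_sum_smul_rankOne ξ (fun i => (hs i).le) ha hb]
  rcases Nat.eq_zero_or_pos n with rfl | hn
  · simp [hΦ.map_zero]
  have : NeZero n := ⟨hn.ne'⟩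
  have hs_sum : 0 ≤ ∑ i, s i := Finset.sum_nonneg fun i _ => (hs i).le
  refine le_of_mul_le_mul_left ?_ (Nat.cast_pos.mpr hn : (0 : ℝ) < n)
  calc (n : ℝ) * (c * ∑ i, s i) = (∑ i, s i) * (c * n) := by ring
    _ ≤ (∑ i, s i) * Φ (initialProj ξ n) := mul_le_mul_of_nonneg_left (hc n) hs_sum
    _ ≤ _ := hΦ.sum_mul_le_card_mul ξ (fun i => (hs i).le) ha hb

end IsUnitarilyInvariantSeminorm

end UnitarilyInvariant

theorem kuroda_criterion_general
    {H : Type} [NormedAddCommGroup H] [InnerProductSpace ℂ H] [CompleteSpace H]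
    (ξ : HilbertBasis ℕ ℂ H)
    (Φ : (H →L[ℂ] H) → ℝ)
    (hnonneg : ∀ x, 0 ≤ Φ x)
    (hzero : ∀ x, FiniteRankOp x → Φ x = 0 → x = 0)
    (hadd : ∀ x y, FiniteRankOp x → FiniteRankOp y → Φ (x + y) ≤ Φ x + Φ y)
    (hsmul : ∀ (c : ℂ) x, FiniteRankOp x → Φ (c • x) = ‖c‖ * Φ x)
    (hunitary : ∀ u v x, u ∈ unitary (H →L[ℂ] H) → v ∈ unitary (H →L[ℂ] H) →
      FiniteRankOp x → Φ (u * x * v) = Φ x) :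
    (∀ ε : ℝ, 0 < ε → ∃ N : ℕ, ∀ e : H →L[ℂ] H, IsProjection e → FiniteRankOp e →
        N ≤ rankOp e → Φ e ≤ ε * rankOp e)
    ↔ ¬ (∃ c C : ℝ, 0 < c ∧ 0 < C ∧ ∀ x, FiniteRankOp x →
        c * trNorm ξ x ≤ Φ x ∧ Φ x ≤ C * trNorm ξ x) := by
  have hΦ : IsUnitarilyInvariantSeminorm Φ := ⟨hadd, hsmul, hunitary⟩
  constructor
  · rintro hlim ⟨c, C, hc, -, hequiv⟩
    obtain ⟨N, hN⟩ := hlim (c / 2) (half_pos hc)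
    have hlow := (hequiv _ (finiteRankOp_initialProj ξ (N + 1))).1
    have hup := hN _ (isProjection_initialProj ξ (N + 1)) (finiteRankOp_initialProj ξ (N + 1))
      (by rw [rankOp_initialProj]; omega)
    rw [trNorm_initialProj] at hlow
    rw [rankOp_initialProj] at hup
    have : (0 : ℝ) < N + 1 := by positivity
    push_cast at hlow hup
    nlinarith
  · intro hne
    by_contra! hnl
    obtain ⟨ε, hε, hbig⟩ := hnl
    have hfreq : ∃ᶠ n in atTop, ε * n ≤ Φ (initialProj ξ n) := frequently_atTop.mpr fun N => by
      obtain ⟨e, he, hfr, hN, hlt⟩ := hbig N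
      exact ⟨rankOp e, hN, hΦ.map_eq_of_isProjection ξ he hfr ▸ hlt.le⟩
    have hpos : 0 < Φ (initialProj ξ 1) := (hnonneg _).lt_of_ne' fun h =>
      initialProj_one_ne_zero ξ (hzero _ (finiteRankOp_initialProj ξ 1) h)
    have hlow := (hΦ.subadditive ξ).mul_le_of_frequently (fun n => hnonneg _) hfreq
    exact hne ⟨ε, _, hε, hpos, fun x hx => ⟨hΦ.mul_trNorm_le ξ hlow hx, hΦ.le_mul_trNorm ξ hx⟩⟩

/-- Kuroda criterion: a unitarily invariant norm `Φ` on the finite-rank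
operators of `B(H)` satisfies `Φ(e)/Tr(e) → 0` (over finite-rank projections `e`, as
`Tr(e) = rank e → ∞`) if and only if `Φ` is not equivalent to the trace norm on
finite-rank operators. -/
theorem kuroda_criterion
    {H : Type} [NormedAddCommGroup H] [InnerProductSpace ℂ H] [CompleteSpace H]
    [TopologicalSpace.SeparableSpace H] (hinf : ¬ FiniteDimensional ℂ H)
    (ξ : HilbertBasis ℕ ℂ H)
    (Φ : (H →L[ℂ] H) → ℝ)
    (hnonneg : ∀ x, 0 ≤ Φ x)
    (hzero : ∀ x, FiniteRankOp x → Φ x = 0 → x = 0)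
    (hadd : ∀ x y, FiniteRankOp x → FiniteRankOp y → Φ (x + y) ≤ Φ x + Φ y)
    (hsmul : ∀ (c : ℂ) x, FiniteRankOp x → Φ (c • x) = ‖c‖ * Φ x)
    (hunitary : ∀ u v x, u ∈ unitary (H →L[ℂ] H) → v ∈ unitary (H →L[ℂ] H) →
      FiniteRankOp x → Φ (u * x * v) = Φ x) :
    (∀ ε : ℝ, 0 < ε → ∃ N : ℕ, ∀ e : H →L[ℂ] H, IsProjection e → FiniteRankOp e →
        N ≤ rankOp e → Φ e ≤ ε * rankOp e)
    ↔ ¬ (∃ c C : ℝ, 0 < c ∧ 0 < C ∧ ∀ x, FiniteRankOp x →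
        c * trNorm ξ x ≤ Φ x ∧ Φ x ≤ C * trNorm ξ x) :=
  kuroda_criterion_general ξ Φ hnonneg hzero hadd hsmul hunitary
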